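/- Let J_Σ, J_Δ : U → ℝ with J_Δ convex and differentiable on a Hilbert space U, let U^ad ⊆ U be nonempty closed convex, and let K : U → ℝ be convex and differentiable. Fix ū ∈ U^ad. If ū minimizes over U^ad the auxiliary cost G(u) = K(u) + J_Σ(u) + ⟨∇J_Δ(ū) - ∇K(ū), u⟩ (with J_Σ convex), then ū minimizes J_Σ + J_Δ over U^ad. -/

import Mathlib

/-!
Write the auxiliary cost as `K + φ` with `φ = J_Σ + ⟪∇J_Δ(ū) - ∇K(ū), ·⟫` convex. Minimality of `ū`
along the segment towards `u ∈ U^ad` gives the variational inequality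
`⟪∇K(ū), u - ū⟫ + φ u - φ ū ≥ 0`, that is `J_Σ u - J_Σ ū + ⟪∇J_Δ(ū), u - ū⟫ ≥ 0`, and the gradient
inequality for the convex `J_Δ` bounds the last term by `J_Δ u - J_Δ ū`.
-/

open RealInnerProductSpace Set

theorem IsMinOn.hasLineDerivAt_add_sub_nonneg {E : Type*} [AddCommGroup E] [Module ℝ E]
    {s : Set E} {f φ : E → ℝ} {x y : E} {d : ℝ} (hmin : IsMinOn (f + φ) s x)
    (hφ : ConvexOn ℝ s φ) (hx : x ∈ s) (hy : y ∈ s) (hf : HasLineDerivAt ℝ f d x (y - x)) :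
    0 ≤ d + (φ y - φ x) := by
  -- `φ` lies below its chord on the segment, so this majorant of `f + φ - φ x` is minimal at `0`.
  let k : ℝ → ℝ := fun t => f (x + t • (y - x)) + t * (φ y - φ x)
  have hk : HasDerivAt k (d + (φ y - φ x)) 0 :=
    HasDerivAt.add (f := fun t : ℝ => f (x + t • (y - x))) hf (hasDerivAt_mul_const _)
  have hk_min : IsMinOn k (Icc 0 1) 0 := by
    refine isMinOn_iff.2 fun t ht => ?_
    have hseg : x + t • (y - x) = (1 - t) • x + t • y := by
      rw [smul_sub, sub_smul, one_smul]; abel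
    have hφ_chord : φ (x + t • (y - x)) ≤ (1 - t) * φ x + t * φ y := by
      rw [hseg]; exact hφ.2 hx hy (by linarith [ht.2]) ht.1 (by ring)
    have hle := isMinOn_iff.1 hmin _ (hφ.1.add_smul_sub_mem hx hy ht)
    simp only [k, Pi.add_apply, zero_smul, add_zero, zero_mul] at hle ⊢
    linarith
  have hone : (1 : ℝ) ∈ posTangentConeAt (Icc 0 1) 0 :=
    mem_posTangentConeAt_of_segment_subset (by simp [segment_eq_Icc])
  simpa using hk_min.localize.hasFDerivWithinAt_nonneg hk.hasFDerivAt.hasFDerivWithinAt hone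

theorem ConvexOn.hasLineDerivAt_le_sub {E : Type*} [AddCommGroup E] [Module ℝ E]
    {s : Set E} {f : E → ℝ} {x y : E} {d : ℝ} (hf : ConvexOn ℝ s f) (hx : x ∈ s) (hy : y ∈ s)
    (hd : HasLineDerivAt ℝ f d x (y - x)) : d ≤ f y - f x := by
  have hmin : IsMinOn (-f + f) s x := isMinOn_iff.2 fun _ _ => by simp
  linarith [hmin.hasLineDerivAt_add_sub_nonneg hf hx hy hd.neg]

theorem app_fixed_point_lemma_general {U : Type*} [NormedAddCommGroup U] [InnerProductSpace ℝ U]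
    [CompleteSpace U]
    (Uad : Set U) (hconv : Convex ℝ Uad)
    (Jsig Jdel K : U → ℝ)
    (hJsig : ConvexOn ℝ Set.univ Jsig)
    (hJdel : ConvexOn ℝ Set.univ Jdel)
    (ubar : U) (hubar : ubar ∈ Uad)
    (gJ gK : U) (hgJ : HasGradientAt Jdel gJ ubar) (hgK : HasGradientAt K gK ubar)
    (hmin : ∀ u ∈ Uad,
      K ubar + Jsig ubar + ⟪gJ - gK, ubar⟫ ≤ K u + Jsig u + ⟪gJ - gK, u⟫) :
    ∀ u ∈ Uad, Jsig ubar + Jdel ubar ≤ Jsig u + Jdel u := by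
  intro u hu
  let φ : U → ℝ := Jsig + fun w => ⟪gJ - gK, w⟫
  have hφ : ConvexOn ℝ Uad φ :=
    (hJsig.subset (subset_univ _) hconv).add ((innerₛₗ ℝ (gJ - gK)).convexOn hconv)
  have hubar_min : IsMinOn (K + φ) Uad ubar :=
    isMinOn_iff.2 fun w hw => by simpa [φ, add_assoc] using hmin w hw
  have hvar := hubar_min.hasLineDerivAt_add_sub_nonneg hφ hubar hu
    (hgK.hasFDerivAt.hasLineDerivAt (u - ubar))
  have hgrad := hJdel.hasLineDerivAt_le_sub (mem_univ ubar) (mem_univ u)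
    (hgJ.hasFDerivAt.hasLineDerivAt (u - ubar))
  simp only [φ, InnerProductSpace.toDual_apply_apply, Pi.add_apply, inner_sub_left,
    inner_sub_right] at hvar hgrad
  linarith

theorem app_fixed_point_lemma {U : Type*} [NormedAddCommGroup U] [InnerProductSpace ℝ U]
    [CompleteSpace U]
    (Uad : Set U) (hne : Uad.Nonempty) (hclosed : IsClosed Uad) (hconv : Convex ℝ Uad)
    (Jsig Jdel K : U → ℝ)
    (hJsig : ConvexOn ℝ Set.univ Jsig)
    (hJdel : ConvexOn ℝ Set.univ Jdel) (hJdeld : Differentiable ℝ Jdel)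
    (hK : ConvexOn ℝ Set.univ K) (hKd : Differentiable ℝ K)
    (ubar : U) (hubar : ubar ∈ Uad)
    (gJ gK : U) (hgJ : HasGradientAt Jdel gJ ubar) (hgK : HasGradientAt K gK ubar)
    (hmin : ∀ u ∈ Uad,
      K ubar + Jsig ubar + ⟪gJ - gK, ubar⟫ ≤ K u + Jsig u + ⟪gJ - gK, u⟫) :
    ∀ u ∈ Uad, Jsig ubar + Jdel ubar ≤ Jsig u + Jdel u :=
  app_fixed_point_lemma_general Uad hconv Jsig Jdel K hJsig hJdel ubar hubar gJ gK hgJ hgK hmin
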